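/- Let C(z) satisfy C(z) = 1 + 2z C(z) + z² C(z)². For positive integers n and integers t ≥ f ≥ 1 (with t > f), the coefficient of z^n in zC(z)·((zC(z))^{t−f} − (z/(1−z))^{t−f})/(1+zC(z))² equals Σ_{k ≥ t−f+1} (−1)^{k−t+f−1}·C(k−1, t−f−1)·(C(2n+k+f−t−3, n−k−1) − C(2n+k+f−t−3, n−k−2)). -/

import Mathlib

/-!
With `A = 1 + zC` the defining equation reads `C = A²`, so `A = 1 + zA²` is the Catalan series
and the prefactor `zC / (1 + zC)²` is just `z`. Since `(1 - z) A² = 1 + zA³`, we have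
`z / (1 - z) = zA² / (1 + zA³)`, and expanding `(1 + zA³)⁻ᵐ` (`m = t - f`) binomially (only
finitely many terms reach `zⁿ`) writes the series as
`-∑_{j ≥ 1} (-1)ʲ C(m+j-1, j) z^{m+j+1} A^{2m+3j}`, the `j = 0` term cancelling `z (zA²)ᵐ`.
The coefficients `[zʲ] Aʳ` are the ballot numbers `C(2j+r-1, j) - C(2j+r-1, j-1)`, obtained
from `Aʳ⁺¹ = Aʳ + z Aʳ⁺²` by induction.
-/

/-- Binomial coefficient `C(a,b)` for integers `a`, `b`, with the convention that it
vanishes when `b < 0` or `b > a`. -/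
def zchoose (a b : ℤ) : ℤ :=
  if 0 ≤ b ∧ b ≤ a then (a.toNat).choose b.toNat else 0

open PowerSeries Finset

lemma zchoose_natCast (a b : ℕ) : zchoose a b = a.choose b := by
  rcases le_or_gt b a with h | h
  · simp [zchoose, h]
  · simp [zchoose, Nat.choose_eq_zero_of_lt h]

lemma zchoose_of_neg {a b : ℤ} (hb : b < 0) : zchoose a b = 0 :=
  if_neg fun h => hb.not_ge h.1

lemma zchoose_zero_right {a : ℤ} (ha : 0 ≤ a) : zchoose a 0 = 1 := by
  simp [zchoose, ha]

lemma zchoose_natCast_add_one (a : ℕ) (b : ℤ) :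
    zchoose (a + 1) b = zchoose a b + zchoose a (b - 1) := by
  rcases lt_or_ge b 0 with hb | hb
  · simp [zchoose_of_neg, hb, show b - 1 < 0 by omega]
  lift b to ℕ using hb
  rcases b with _ | b
  · rw [Nat.cast_zero, zchoose_zero_right (by positivity), zchoose_zero_right (by positivity),
      zchoose_of_neg (by norm_num), add_zero]
  · rw [show ((b + 1 : ℕ) : ℤ) - 1 = b by push_cast; ring, ← Nat.cast_add_one a, zchoose_natCast,
      zchoose_natCast, zchoose_natCast, Nat.choose_succ_succ']
    push_cast; ring

/-- `r / (2j + r) * C(2j + r, j)`, written without division. -/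
def ballot (j r : ℤ) : ℤ :=
  zchoose (2 * j + r - 1) j - zchoose (2 * j + r - 1) (j - 1)

lemma ballot_of_neg {j : ℤ} (hj : j < 0) (r : ℤ) : ballot j r = 0 := by
  simp [ballot, zchoose_of_neg hj, zchoose_of_neg (show j - 1 < 0 by omega)]

lemma ballot_zero_left {r : ℕ} (hr : 0 < r) : ballot 0 r = 1 := by
  rw [ballot, zchoose_of_neg (b := 0 - 1) (by norm_num), zchoose_zero_right (by omega), sub_zero]

lemma ballot_succ_zero (j : ℕ) : ballot (j + 1) 0 = 0 := by
  have h := Nat.choose_symm_half j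
  simp only [ballot]
  rw [show 2 * ((j : ℤ) + 1) + 0 - 1 = ((2 * j + 1 : ℕ) : ℤ) by push_cast; ring,
    add_sub_cancel_right, ← Nat.cast_succ, zchoose_natCast, zchoose_natCast, h, sub_self]

lemma ballot_succ_succ (j r : ℕ) :
    ballot (j + 1) (r + 1) = ballot (j + 1) r + ballot j (r + 2) := by
  simp only [ballot]
  rw [show 2 * ((j : ℤ) + 1) + (r + 1) - 1 = ((2 * j + r + 1 : ℕ) : ℤ) + 1 by push_cast; ring,
    show 2 * ((j : ℤ) + 1) + r - 1 = ((2 * j + r + 1 : ℕ) : ℤ) by push_cast; ring,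
    show 2 * (j : ℤ) + (r + 2) - 1 = ((2 * j + r + 1 : ℕ) : ℤ) by push_cast; ring,
    zchoose_natCast_add_one, zchoose_natCast_add_one, add_sub_cancel_right]
  ring

section CatalanPowers

variable {R : Type*} [CommRing R] {A : R⟦X⟧}

theorem coeff_pow_eq_ballot (hA : A = 1 + X * A ^ 2) (j : ℕ) {r : ℕ} (hr : 0 < r) :
    coeff j (A ^ r) = ballot j r := by
  have pow_succ_eq (r : ℕ) : A ^ (r + 1) = A ^ r + X * A ^ (r + 2) := by
    linear_combination A ^ r * hA
  induction j generalizing r with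
  | zero =>
    have hA0 : constantCoeff A = 1 := by rw [hA]; simp
    simp [coeff_zero_eq_constantCoeff_apply, hA0, ballot_zero_left hr]
  | succ j ih =>
    clear hr
    induction r with
    | zero => simp [coeff_one, ballot_succ_zero]
    | succ r ihr =>
      rw [pow_succ_eq, map_add, coeff_succ_X_mul, ihr, ih (by omega)]
      push_cast
      rw [ballot_succ_succ]
      push_cast; ring

theorem coeff_X_pow_mul_pow_eq_ballot (hA : A = 1 + X * A ^ 2) (n s : ℕ) {r : ℕ} (hr : 0 < r) :
    coeff n ((X : R⟦X⟧) ^ s * A ^ r) = ballot (n - s) r := by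
  rw [coeff_X_pow_mul']
  split_ifs with h
  · rw [coeff_pow_eq_ballot hA _ hr, Nat.cast_sub h]
  · rw [ballot_of_neg (by omega), Int.cast_zero]

end CatalanPowers

section NegBinomial

variable {R : Type*} [CommRing R]

/-- The binomial series of `(1 + u)⁻ᵐ`, truncated after `u ^ N`. -/
def negBinomialSum (u : R) (m N : ℕ) : R :=
  ∑ j ∈ range (N + 1), (-1) ^ j * (m.multichoose j : R) * u ^ j

lemma negBinomialSum_zero_left (u : R) (N : ℕ) : negBinomialSum u 0 N = 1 := by
  simp [negBinomialSum, sum_range_succ']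

lemma negBinomialSum_succ (u : R) (m N : ℕ) :
    negBinomialSum u m (N + 1) =
      negBinomialSum u m N + (-1) ^ (N + 1) * (m.multichoose (N + 1) : R) * u ^ (N + 1) :=
  sum_range_succ _ _

lemma one_add_mul_negBinomialSum_succ (u : R) (m N : ℕ) :
    (1 + u) * negBinomialSum u (m + 1) N =
      negBinomialSum u m N + (-1) ^ N * ((m + 1).multichoose N : R) * u ^ (N + 1) := by
  induction N with
  | zero => simp [negBinomialSum]
  | succ N ih =>
    rw [negBinomialSum_succ, negBinomialSum_succ, mul_add, ih, Nat.multichoose_succ_succ]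
    push_cast
    ring

lemma pow_dvd_one_add_pow_mul_negBinomialSum_sub_one (u : R) (m N : ℕ) :
    u ^ (N + 1) ∣ (1 + u) ^ m * negBinomialSum u m N - 1 := by
  induction m with
  | zero => simp [negBinomialSum_zero_left]
  | succ m ih =>
    have h : (1 + u) ^ (m + 1) * negBinomialSum u (m + 1) N - 1 =
        ((1 + u) ^ m * negBinomialSum u m N - 1) +
          u ^ (N + 1) * ((-1) ^ N * ((m + 1).multichoose N : R) * (1 + u) ^ m) := by
      rw [pow_succ, mul_assoc, one_add_mul_negBinomialSum_succ]
      ring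
    exact h ▸ dvd_add ih (dvd_mul_right _ _)

end NegBinomial

theorem coeff_mul_inv_one_add_pow {K : Type*} [Field K] {f u : K⟦X⟧} {s N n : ℕ}
    (hf : X ^ s ∣ f) (hu : X ∣ u) (hn : n ≤ s + N) (m : ℕ) :
    coeff n (f * (1 + u)⁻¹ ^ m) =
      ∑ j ∈ range (N + 1), (-1) ^ j * (m.multichoose j : K) * coeff n (f * u ^ j) := by
  have hunit : (1 + u) ^ m * (1 + u)⁻¹ ^ m = 1 := by
    rw [← mul_pow, PowerSeries.mul_inv_cancel _ (by simp [X_dvd_iff.1 hu]), one_pow]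
  obtain ⟨E, hE⟩ := pow_dvd_one_add_pow_mul_negBinomialSum_sub_one u m N
  have htrunc : f * (1 + u)⁻¹ ^ m - f * negBinomialSum u m N =
      -(f * u ^ (N + 1) * (E * (1 + u)⁻¹ ^ m)) := by
    linear_combination f * negBinomialSum u m N * hunit - f * (1 + u)⁻¹ ^ m * hE
  have hdvd : X ^ (s + N + 1) ∣ f * u ^ (N + 1) * (E * (1 + u)⁻¹ ^ m) := by
    rw [add_assoc, pow_add]
    exact (mul_dvd_mul hf (pow_dvd_pow_of_dvd hu _)).mul_right _
  have hcoeff := X_pow_dvd_iff.1 hdvd.neg_right n (by omega)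
  rw [← htrunc, map_sub, sub_eq_zero] at hcoeff
  rw [hcoeff, negBinomialSum, mul_sum, map_sum]
  refine sum_congr rfl fun j _ => ?_
  have hcast : ((-1) ^ j * m.multichoose j : K⟦X⟧) = C ((-1) ^ j * (m.multichoose j : K)) := by
    simp
  rw [hcast, mul_left_comm, coeff_C_mul]

section CatalanSeries

variable {K : Type*} [Field K] {A : K⟦X⟧}

theorem inv_one_sub_X_eq (hA : A = 1 + X * A ^ 2) : (1 - X)⁻¹ = A ^ 2 * (1 + X * A ^ 3)⁻¹ := by
  have hu : constantCoeff (1 + X * A ^ 3) ≠ 0 := by simp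
  rw [PowerSeries.inv_eq_iff_mul_eq_one (by simp)]
  linear_combination (1 + X * A ^ 3)⁻¹ * (1 + A) * hA + PowerSeries.inv_mul_cancel _ hu

theorem coeff_X_mul_pow_sub_pow_eq_sum_ballot (hA : A = 1 + X * A ^ 2) {m : ℕ} (hm : 0 < m)
    (n : ℕ) :
    coeff n (X * ((X * A ^ 2) ^ m - (X * (1 - X)⁻¹) ^ m)) =
      ∑ k ∈ Icc (m + 1) n,
        (-1) ^ (k - m - 1) * ((k - 1).choose (m - 1) : K) * ballot (n - k - 1) (3 * k - m) := by
  have hsplit : X * ((X * A ^ 2) ^ m - (X * (1 - X)⁻¹) ^ m) =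
      X ^ (m + 1) * A ^ (2 * m) - X ^ (m + 1) * A ^ (2 * m) * (1 + X * A ^ 3)⁻¹ ^ m := by
    rw [inv_one_sub_X_eq hA]; ring
  have hterm (j : ℕ) : X ^ (m + 1) * A ^ (2 * m) * (X * A ^ 3) ^ j =
      X ^ (m + 1 + j) * A ^ (2 * m + 3 * j) := by ring
  have hcoeff (j : ℕ) : coeff n (X ^ (m + 1 + j) * A ^ (2 * m + 3 * j)) =
      (ballot (n - (m + 1 + j : ℕ)) (2 * m + 3 * j : ℕ) : K) :=
    coeff_X_pow_mul_pow_eq_ballot hA _ _ (by omega)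
  rw [hsplit, map_sub, coeff_mul_inv_one_add_pow (N := n - m) (dvd_mul_right _ _)
    (dvd_mul_right _ _) (by omega), sum_range_succ']
  simp only [hterm, hcoeff]
  have h0 := hcoeff 0
  simp only [add_zero, mul_zero] at h0
  simp only [add_zero, mul_zero, pow_zero, Nat.multichoose_zero_right, Nat.cast_one, one_mul]
  rw [h0, sub_add_cancel_right, ← sum_neg_distrib, ← Ico_add_one_right_eq_Icc,
    sum_Ico_eq_sum_range, show n + 1 - (m + 1) = n - m by omega]
  refine sum_congr rfl fun j _ => ?_
  have hballot : ballot (n - (m + 1 + (j + 1) : ℕ)) (2 * m + 3 * (j + 1) : ℕ) =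
      ballot (n - (m + 1 + j : ℕ) - 1) (3 * (m + 1 + j : ℕ) - m) := by
    congr 1 <;> push_cast <;> ring
  rw [hballot, Nat.multichoose_eq, show m + 1 + j - m - 1 = j by omega,
    show m + 1 + j - 1 = (m - 1) + (j + 1) by omega,
    show m + (j + 1) - 1 = (m - 1) + (j + 1) by omega, Nat.choose_symm_add, pow_succ]
  ring

end CatalanSeries

open PowerSeries in
theorem coeff_motzkin_term6_general (C : PowerSeries ℚ)
    (hC : C = 1 + 2 * X * C + X ^ 2 * C ^ 2) (n f t : ℕ)
    (htf : f < t) :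
    PowerSeries.coeff (R := ℚ) n
        (X * C * ((X * C) ^ (t - f) - (X * (1 - X)⁻¹) ^ (t - f)) * ((1 + X * C) ^ 2)⁻¹) =
      ∑ k ∈ Finset.Icc (t - f + 1) n,
        ((-1 : ℚ) ^ ((k : ℤ) - t + f - 1)
          * (zchoose ((k : ℤ) - 1) ((t : ℤ) - f - 1) : ℚ)
          * ((zchoose (2 * (n : ℤ) + k + f - t - 3) ((n : ℤ) - k - 1)
              - zchoose (2 * (n : ℤ) + k + f - t - 3) ((n : ℤ) - k - 2) : ℤ) : ℚ)) := by
  set A : ℚ⟦X⟧ := 1 + X * C with hAC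
  have hCA : C = A ^ 2 := by rw [hAC]; linear_combination hC
  have hA : A = 1 + X * A ^ 2 := by rw [← hCA]
  have hA2 : A ^ 2 * (A ^ 2)⁻¹ = 1 := PowerSeries.mul_inv_cancel _ (by simp [hAC])
  have hseries : X * C * ((X * C) ^ (t - f) - (X * (1 - X)⁻¹) ^ (t - f)) * (A ^ 2)⁻¹ =
      X * ((X * A ^ 2) ^ (t - f) - (X * (1 - X)⁻¹) ^ (t - f)) := by
    rw [hCA]
    linear_combination X * ((X * A ^ 2) ^ (t - f) - (X * (1 - X)⁻¹) ^ (t - f)) * hA2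
  rw [hseries, coeff_X_mul_pow_sub_pow_eq_sum_ballot hA (by omega)]
  refine sum_congr rfl fun k hk => ?_
  have hmk := (mem_Icc.1 hk).1
  have hballot : ballot (n - k - 1) (3 * k - (t - f : ℕ)) =
      zchoose (2 * (n : ℤ) + k + f - t - 3) ((n : ℤ) - k - 1)
        - zchoose (2 * (n : ℤ) + k + f - t - 3) ((n : ℤ) - k - 2) := by
    rw [ballot]
    congr 2 <;> omega
  rw [hballot, show (k : ℤ) - t + f - 1 = (k - (t - f) - 1 : ℕ) by omega, zpow_natCast,
    show (k : ℤ) - 1 = (k - 1 : ℕ) by omega, show (t : ℤ) - f - 1 = (t - f - 1 : ℕ) by omega,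
    zchoose_natCast, Int.cast_natCast]

open PowerSeries in
/-- If `C(z)` satisfies `C = 1 + 2zC + z²C²`, then for a positive integer `n` and
integers `t > f ≥ 1`, the coefficient of `z^n` in
`zC·((zC)^{t−f} − (z/(1−z))^{t−f})/(1+zC)²` equals
`Σ_{k ≥ t−f+1} (−1)^{k−t+f−1}·C(k−1,t−f−1)·(C(2n+k+f−t−3,n−k−1) − C(2n+k+f−t−3,n−k−2))`;
the terms with `k > n` vanish, so the sum may be taken over `t−f+1 ≤ k ≤ n`. -/
theorem coeff_motzkin_term6 (C : PowerSeries ℚ)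
    (hC : C = 1 + 2 * X * C + X ^ 2 * C ^ 2) (n f t : ℕ) (hn : 1 ≤ n) (hf : 1 ≤ f)
    (htf : f < t) :
    PowerSeries.coeff (R := ℚ) n
        (X * C * ((X * C) ^ (t - f) - (X * (1 - X)⁻¹) ^ (t - f)) * ((1 + X * C) ^ 2)⁻¹) =
      ∑ k ∈ Finset.Icc (t - f + 1) n,
        ((-1 : ℚ) ^ ((k : ℤ) - t + f - 1)
          * (zchoose ((k : ℤ) - 1) ((t : ℤ) - f - 1) : ℚ)
          * ((zchoose (2 * (n : ℤ) + k + f - t - 3) ((n : ℤ) - k - 1)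
              - zchoose (2 * (n : ℤ) + k + f - t - 3) ((n : ℤ) - k - 2) : ℤ) : ℚ)) :=
  coeff_motzkin_term6_general C hC n f t htf
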